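/- Unconditional stability of the fixed stress scheme: Fix constants a_max > 0, 0 < k_min ≤ k_max, β_e > 0, β_d > 0, c_ι > 0 and 0 < α ≤ 1. There exists a constant C, depending only on α, a_max, k_min, k_max, β_e, β_d and c_ι — in particular independent of N, Δt, c₀, a_min and of the spaces, operators and sequences below — such that the following holds. Let X, V, Q, Z, W be real inner product spaces; A : X →L[ℝ] X symmetric with a_min ‖τ‖² ≤ ⟪A τ, τ⟫ ≤ a_max ‖τ‖² for all τ (for some a_min > 0); T : Z →L[ℝ] Z symmetric with (1/k_max)‖q‖² ≤ ⟪T q, q⟫ ≤ (1/k_min)‖q‖² for all q; Dₑ : X →ₗ V, S : X →ₗ Q, D : Z →ₗ W linear maps satisfying the elasticity inf-sup condition with constant β_e and the Darcy inf-sup condition with constant β_d; ι : W →ₗ X linear with ‖ι w‖ ≤ c_ι ‖w‖ for all w; c₀ ≥ 0, Δt > 0, N ≥ 1. Suppose σ⁰,…,σᴺ ∈ X, u⁰,…,uᴺ ∈ V, γ⁰,…,γᴺ ∈ Q, z⁰,…,zᴺ ∈ Z, p⁰,…,pᴺ ∈ W satisfy, with the convention σ^{−1} := σ⁰, for every n =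 −1, 0, …, N−1: (i) ⟪T z^{n+1}, q⟫ = ⟪p^{n+1}, D q⟫ for all q ∈ Z; (ii) ⟪A σ^{n+1}, τ⟫ + ⟪u^{n+1}, Dₑ τ⟫ + ⟪γ^{n+1}, S τ⟫ = −α ⟪A(ι p^{n+1}), τ⟫ for all τ ∈ X; (iii) Dₑ σ^{n+1} = 0; (iv) S σ^{n+1} = 0; and for every n = 0, …, N−1: (v) (c₀/Δt)⟪p^{n+1} − p^{n}, w⟫ + (α²/Δt)⟪A ι(p^{n+1} − p^{n}), ι w⟫ + ⟪D z^{n+1}, w⟫ = −(α/Δt)⟪A(σ^{n} − σ^{n−1}), ι w⟫ for all w ∈ W. Then Σ_{n=0}^{N−1} (c₀/Δt)‖p^{n+1} − p^{n}‖² + max_{0 ≤ n ≤ N−1} ( ‖z^{n+1}‖² + ‖p^{n+1}‖² + ⟪A σ^{n+1}, σ^{n+1}⟫ + ‖u^{n+1}‖² + ‖γ^{n+1}‖² ) ≤ C ‖z⁰‖². -/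

import Mathlib

/-!
Testing the flow equation (v) with the pressure increment and using the Darcy law (i) at two
consecutive levels shows that `⟪T z, z⟫ + (α² / Δt) ⟪A ι δp, ι δp⟫` does not increase from one
time level to the next. The fixed-stress coupling term is absorbed by Young's inequality, since the
mechanics equations (ii)–(iv) bound the stress increment in the `A`-seminorm by `α` times the
previous load increment `ι δp`. The two inf-sup conditions then turn the bound on `⟪T z, z⟫` into
bounds on `p` and, through the load `ι p`, on `σ`, `u` and `γ`.
-/

open scoped RealInnerProductSpace

open Finset

namespace LinearMap

variable {E : Type*} [NormedAddCommGroup E] [InnerProductSpace ℝ E] {B : E →ₗ[ℝ] E}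

theorem IsSymmetric.inner_map_add_add_self (hB : B.IsSymmetric) (x y : E) :
    ⟪B (x + y), x + y⟫ = ⟪B x, x⟫ + 2 * ⟪B x, y⟫ + ⟪B y, y⟫ := by
  have hyx : ⟪B y, x⟫ = ⟪B x, y⟫ := by rw [hB y x, real_inner_comm]
  rw [map_add, inner_add_left, inner_add_right, inner_add_right, hyx]
  ring

namespace IsPositive

theorem two_mul_inner_le (hB : B.IsPositive) (x y : E) :
    2 * ⟪B x, y⟫ ≤ ⟪B x, x⟫ + ⟪B y, y⟫ := by
  have h := hB.inner_nonneg_left (x + -y)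
  rw [hB.isSymmetric.inner_map_add_add_self, map_neg, inner_neg_left, inner_neg_right,
    inner_neg_right, neg_neg] at h
  linarith

theorem inner_sq_le (hB : B.IsPositive) (x y : E) :
    ⟪B x, y⟫ ^ 2 ≤ ⟪B x, x⟫ * ⟪B y, y⟫ := by
  have hquad : ∀ t : ℝ, 0 ≤ ⟪B x, x⟫ * (t * t) + 2 * ⟪B x, y⟫ * t + ⟪B y, y⟫ := fun t => by
    have h := hB.inner_nonneg_left (t • x + y)
    rw [hB.isSymmetric.inner_map_add_add_self, map_smul, real_inner_smul_left,
      real_inner_smul_left, real_inner_smul_right] at h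
    linarith
  have h := discrim_le_zero hquad
  rw [discrim] at h
  linarith

theorem abs_inner_le (hB : B.IsPositive) (x y : E) :
    |⟪B x, y⟫| ≤ √⟪B x, x⟫ * √⟪B y, y⟫ := by
  rw [← Real.sqrt_mul (hB.inner_nonneg_left x)]
  exact Real.abs_le_sqrt (hB.inner_sq_le x y)

end IsPositive

end LinearMap

theorem sq_le_one_of_sqrt_sq_add_le_one {x y : ℝ} (hy : 0 ≤ y) (h : √(x ^ 2 + y) ≤ 1) :
    x ^ 2 ≤ 1 := by
  rw [Real.sqrt_le_one] at h
  linarith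

theorem sum_range_add_le_of_forall_add_le {a f : ℕ → ℝ} {N : ℕ}
    (h : ∀ n < N, a n + f (n + 1) ≤ f n) : ∀ m ≤ N, ∑ k ∈ range m, a k + f m ≤ f 0 := by
  intro m hm
  induction m with
  | zero => simp
  | succ m ih =>
    rw [sum_range_succ]
    linarith [h m hm, ih (by omega)]

section Mechanics

variable {X V Q : Type*} [NormedAddCommGroup X] [InnerProductSpace ℝ X]
  [NormedAddCommGroup V] [InnerProductSpace ℝ V] [NormedAddCommGroup Q] [InnerProductSpace ℝ Q]
  {A : X →ₗ[ℝ] X} {De : X →ₗ[ℝ] V} {S : X →ₗ[ℝ] Q} {α : ℝ}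

/-- The mechanics problem (ii)–(iv) with load `x`, which is `ι p` in the Biot system. -/
structure IsElasticSolution (A : X →ₗ[ℝ] X) (De : X →ₗ[ℝ] V) (S : X →ₗ[ℝ] Q) (α : ℝ)
    (x σ : X) (u : V) (γ : Q) : Prop where
  inner_eq : ∀ τ, ⟪A σ, τ⟫ + ⟪u, De τ⟫ + ⟪γ, S τ⟫ = -(α * ⟪A x, τ⟫)
  div_eq_zero : De σ = 0
  skew_eq_zero : S σ = 0

namespace IsElasticSolution

variable {x x' σ σ' : X} {u u' : V} {γ γ' : Q}

theorem sub (h : IsElasticSolution A De S α x σ u γ) (h' : IsElasticSolution A De S α x' σ' u' γ') :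
    IsElasticSolution A De S α (x - x') (σ - σ') (u - u') (γ - γ') where
  inner_eq τ := by
    simp only [map_sub, inner_sub_left]
    linarith [h.inner_eq τ, h'.inner_eq τ]
  div_eq_zero := by rw [map_sub, h.div_eq_zero, h'.div_eq_zero, sub_zero]
  skew_eq_zero := by rw [map_sub, h.skew_eq_zero, h'.skew_eq_zero, sub_zero]

theorem inner_self_eq (h : IsElasticSolution A De S α x σ u γ) :
    ⟪A σ, σ⟫ = -(α * ⟪A x, σ⟫) := by
  simpa [h.div_eq_zero, h.skew_eq_zero] using h.inner_eq σ

theorem inner_self_le (h : IsElasticSolution A De S α x σ u γ) (hA : A.IsPositive) :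
    ⟪A σ, σ⟫ ≤ α ^ 2 * ⟪A x, x⟫ := by
  have hAM := hA.two_mul_inner_le σ ((-α) • x)
  rw [map_smul, real_inner_smul_right, real_inner_smul_left, real_inner_smul_right,
    hA.isSymmetric σ x, real_inner_comm] at hAM
  linarith [h.inner_self_eq]

theorem norm_add_norm_le (h : IsElasticSolution A De S α x σ u γ) (hA : A.IsPositive)
    {a β : ℝ} (ha : 0 ≤ a) (hAup : ∀ τ, ⟪A τ, τ⟫ ≤ a * ‖τ‖ ^ 2) (hα : |α| ≤ 1)
    (hinfsup : ∀ (v : V) (ξ : Q), ∃ τ : X,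
      √(‖τ‖ ^ 2 + ‖De τ‖ ^ 2) ≤ 1 ∧ β * (‖v‖ + ‖ξ‖) ≤ ⟪v, De τ⟫ + ⟪ξ, S τ⟫) :
    β * (‖u‖ + ‖γ‖) ≤ 2 * a * ‖x‖ := by
  obtain ⟨τ, hτ, hβ⟩ := hinfsup u γ
  have hτA : √⟪A τ, τ⟫ ≤ √a := Real.sqrt_le_sqrt <|
    (hAup τ).trans (mul_le_of_le_one_right ha (sq_le_one_of_sqrt_sq_add_le_one (by positivity) hτ))
  have hxA : √⟪A x, x⟫ ≤ √a * ‖x‖ := by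
    rw [← Real.sqrt_sq (norm_nonneg x), ← Real.sqrt_mul ha]
    exact Real.sqrt_le_sqrt (hAup x)
  have hσA : √⟪A σ, σ⟫ ≤ |α| * √⟪A x, x⟫ := by
    rw [← Real.sqrt_sq_eq_abs, ← Real.sqrt_mul (sq_nonneg α)]
    exact Real.sqrt_le_sqrt (h.inner_self_le hA)
  calc β * (‖u‖ + ‖γ‖) ≤ ⟪u, De τ⟫ + ⟪γ, S τ⟫ := hβ
    _ = -⟪A σ, τ⟫ + -α * ⟪A x, τ⟫ := by linarith [h.inner_eq τ]
    _ ≤ |⟪A σ, τ⟫| + |α| * |⟪A x, τ⟫| := by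
      rw [← abs_neg α, ← abs_mul]
      exact add_le_add (neg_le_abs _) (le_abs_self _)
    _ ≤ √⟪A σ, σ⟫ * √⟪A τ, τ⟫ + |α| * (√⟪A x, x⟫ * √⟪A τ, τ⟫) := by
      gcongr <;> exact hA.abs_inner_le _ _
    _ ≤ |α| * √⟪A x, x⟫ * √⟪A τ, τ⟫ + |α| * (√⟪A x, x⟫ * √⟪A τ, τ⟫) := by gcongr
    _ = 2 * |α| * √⟪A x, x⟫ * √⟪A τ, τ⟫ := by ring
    _ ≤ 2 * 1 * (√a * ‖x‖) * √a := by gcongr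
    _ = 2 * (√a * √a) * ‖x‖ := by ring
    _ = 2 * a * ‖x‖ := by rw [Real.mul_self_sqrt ha]

theorem inner_self_add_sq_add_sq_le
    (h : IsElasticSolution A De S α x σ u γ) (hA : A.IsPositive) {a β : ℝ} (ha : 0 ≤ a)
    (hAup : ∀ τ, ⟪A τ, τ⟫ ≤ a * ‖τ‖ ^ 2) (hα : |α| ≤ 1) (hβ : 0 < β)
    (hinfsup : ∀ (v : V) (ξ : Q), ∃ τ : X,
      √(‖τ‖ ^ 2 + ‖De τ‖ ^ 2) ≤ 1 ∧ β * (‖v‖ + ‖ξ‖) ≤ ⟪v, De τ⟫ + ⟪ξ, S τ⟫) :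
    ⟪A σ, σ⟫ + ‖u‖ ^ 2 + ‖γ‖ ^ 2 ≤ (a + (2 * a / β) ^ 2) * ‖x‖ ^ 2 := by
  have hσ : ⟪A σ, σ⟫ ≤ a * ‖x‖ ^ 2 :=
    (h.inner_self_le hA).trans <| (mul_le_of_le_one_left (hA.inner_nonneg_left x)
      ((sq_le_one_iff_abs_le_one α).2 hα)).trans (hAup x)
  have huγ : ‖u‖ + ‖γ‖ ≤ 2 * a / β * ‖x‖ := by
    rw [div_mul_eq_mul_div, le_div_iff₀' hβ]
    exact h.norm_add_norm_le hA ha hAup hα hinfsup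
  have hsq : (‖u‖ + ‖γ‖) ^ 2 ≤ (2 * a / β * ‖x‖) ^ 2 := pow_le_pow_left₀ (by positivity) huγ 2
  rw [mul_pow] at hsq
  nlinarith [norm_nonneg u, norm_nonneg γ]

end IsElasticSolution

end Mechanics

section Flow

variable {Z W : Type*} [NormedAddCommGroup Z] [InnerProductSpace ℝ Z]
  [NormedAddCommGroup W] [InnerProductSpace ℝ W] {T : Z →ₗ[ℝ] Z} {D : Z →ₗ[ℝ] W}

/-- The Darcy law (i). -/
def IsDarcySolution (T : Z →ₗ[ℝ] Z) (D : Z →ₗ[ℝ] W) (z : Z) (p : W) : Prop :=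
  ∀ q, ⟪T z, q⟫ = ⟪p, D q⟫

namespace IsDarcySolution

variable {z z' : Z} {p p' : W}

theorem sub_le_inner (h : IsDarcySolution T D z p) (h' : IsDarcySolution T D z' p')
    (hT : T.IsPositive) : (⟪T z', z'⟫ - ⟪T z, z⟫) / 2 ≤ ⟪D z', p' - p⟫ := by
  have hAM := hT.two_mul_inner_le z z'
  rw [real_inner_comm (p' - p), inner_sub_left, ← h' z', ← h z']
  linarith

theorem sq_mul_norm_le (h : IsDarcySolution T D z p) (hT : T.IsPositive) {K β : ℝ}
    (hK : 0 ≤ K) (hTup : ∀ q, ⟪T q, q⟫ ≤ K * ‖q‖ ^ 2) (hβ : 0 ≤ β)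
    (hinfsup : ∀ w : W, ∃ q : Z, √(‖q‖ ^ 2 + ‖D q‖ ^ 2) ≤ 1 ∧ β * ‖w‖ ≤ ⟪D q, w⟫) :
    (β * ‖p‖) ^ 2 ≤ K * ⟪T z, z⟫ := by
  obtain ⟨q, hq, hβq⟩ := hinfsup p
  have hTq : ⟪T q, q⟫ ≤ K :=
    (hTup q).trans (mul_le_of_le_one_right hK (sq_le_one_of_sqrt_sq_add_le_one (by positivity) hq))
  calc (β * ‖p‖) ^ 2 ≤ ⟪T z, q⟫ ^ 2 := by
        rw [h q, real_inner_comm]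
        exact pow_le_pow_left₀ (by positivity) hβq 2
    _ ≤ ⟪T z, z⟫ * ⟪T q, q⟫ := hT.inner_sq_le z q
    _ ≤ ⟪T z, z⟫ * K := mul_le_mul_of_nonneg_left hTq (hT.inner_nonneg_left z)
    _ = K * ⟪T z, z⟫ := mul_comm _ _

end IsDarcySolution

end Flow

section FixedStress

variable {X V Q Z W : Type*} [NormedAddCommGroup X] [InnerProductSpace ℝ X]
  [NormedAddCommGroup V] [InnerProductSpace ℝ V] [NormedAddCommGroup Q] [InnerProductSpace ℝ Q]
  [NormedAddCommGroup Z] [InnerProductSpace ℝ Z] [NormedAddCommGroup W] [InnerProductSpace ℝ W]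
  {A : X →ₗ[ℝ] X} {T : Z →ₗ[ℝ] Z} {De : X →ₗ[ℝ] V} {S : X →ₗ[ℝ] Q} {D : Z →ₗ[ℝ] W}
  {ι : W →ₗ[ℝ] X} {α c₀ Δt : ℝ}

theorem fixed_stress_step_le (hA : A.IsPositive) (hT : T.IsPositive) (hΔt : 0 < Δt)
    {z z' : Z} {p p' : W} {δσ δx δx' : X}
    (hz : IsDarcySolution T D z p) (hz' : IsDarcySolution T D z' p')
    (hδσ : ⟪A δσ, δσ⟫ ≤ α ^ 2 * ⟪A δx, δx⟫)
    (hflow : c₀ / Δt * ⟪p' - p, p' - p⟫ + α ^ 2 / Δt * ⟪A δx', δx'⟫ + ⟪D z', p' - p⟫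
      = -(α / Δt * ⟪A δσ, δx'⟫)) :
    c₀ / Δt * ‖p' - p‖ ^ 2 + (α ^ 2 / Δt * ⟪A δx', δx'⟫ + ⟪T z', z'⟫) / 2
      ≤ (α ^ 2 / Δt * ⟪A δx, δx⟫ + ⟪T z, z⟫) / 2 := by
  have hAM := hA.two_mul_inner_le δσ ((-α) • δx')
  rw [map_smul, real_inner_smul_right, real_inner_smul_left, real_inner_smul_right] at hAM
  have hΔt' : 0 ≤ Δt⁻¹ := by positivity
  have hcoupling := mul_le_mul_of_nonneg_left hAM hΔt'
  have hδσ' := mul_le_mul_of_nonneg_left hδσ hΔt'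
  rw [real_inner_self_eq_norm_sq] at hflow
  have hdarcy := hz.sub_le_inner hz' hT
  simp only [div_eq_mul_inv] at hflow ⊢
  linarith

theorem fixed_stress_energy_le (hA : A.IsPositive) (hT : T.IsPositive) (hΔt : 0 < Δt)
    {N : ℕ} {σ : ℕ → X} {u : ℕ → V} {γ : ℕ → Q} {z : ℕ → Z} {p : ℕ → W}
    (hz : ∀ n ≤ N, IsDarcySolution T D (z n) (p n))
    (hσ : ∀ n ≤ N, IsElasticSolution A De S α (ι (p n)) (σ n) (u n) (γ n))
    (hflow : ∀ n < N, ∀ w : W,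
      c₀ / Δt * ⟪p (n + 1) - p n, w⟫ + α ^ 2 / Δt * ⟪A (ι (p (n + 1) - p n)), ι w⟫
        + ⟪D (z (n + 1)), w⟫ = -(α / Δt * ⟪A (σ n - σ (n - 1)), ι w⟫))
    (m : ℕ) (hm : m ≤ N) :
    ∑ k ∈ range m, c₀ / Δt * ‖p (k + 1) - p k‖ ^ 2 + ⟪T (z m), z m⟫ / 2
      ≤ ⟪T (z 0), z 0⟫ / 2 := by
  set G : ℕ → ℝ := fun n => α ^ 2 / Δt * ⟪A (ι (p n - p (n - 1))), ι (p n - p (n - 1))⟫ with hG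
  have hstep : ∀ n < N, c₀ / Δt * ‖p (n + 1) - p n‖ ^ 2
      + (G (n + 1) + ⟪T (z (n + 1)), z (n + 1)⟫) / 2 ≤ (G n + ⟪T (z n), z n⟫) / 2 := by
    intro n hn
    have hδσ := ((hσ n hn.le).sub (hσ (n - 1) (by omega))).inner_self_le hA
    rw [← map_sub] at hδσ
    exact fixed_stress_step_le hA hT hΔt (hz n hn.le) (hz (n + 1) hn) hδσ (hflow n hn _)
  -- `0 - 1 = 0` in `ℕ`: with the convention `σ⁻¹ = σ⁰` the initial load increment vanishes.
  have hG0 : G 0 = 0 := by simp [hG]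
  have hGm : 0 ≤ G m := mul_nonneg (by positivity) (hA.inner_nonneg_left _)
  linarith [sum_range_add_le_of_forall_add_le
    (f := fun n => (G n + ⟪T (z n), z n⟫) / 2) hstep m hm]

theorem fixed_stress_level_le (hA : A.IsPositive) (hT : T.IsPositive)
    {a_max k_min k_max β_e β_d c_ι : ℝ} (ha_max : 0 ≤ a_max) (hk_min : 0 < k_min)
    (hk_max : 0 < k_max) (hβ_e : 0 < β_e) (hβ_d : 0 < β_d) (hα : |α| ≤ 1)
    (hAup : ∀ τ : X, ⟪A τ, τ⟫ ≤ a_max * ‖τ‖ ^ 2)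
    (hTlow : ∀ q : Z, 1 / k_max * ‖q‖ ^ 2 ≤ ⟪T q, q⟫)
    (hTup : ∀ q : Z, ⟪T q, q⟫ ≤ 1 / k_min * ‖q‖ ^ 2)
    (hinfsupE : ∀ (v : V) (ξ : Q), ∃ τ : X,
      √(‖τ‖ ^ 2 + ‖De τ‖ ^ 2) ≤ 1 ∧ β_e * (‖v‖ + ‖ξ‖) ≤ ⟪v, De τ⟫ + ⟪ξ, S τ⟫)
    (hinfsupD : ∀ w : W, ∃ q : Z, √(‖q‖ ^ 2 + ‖D q‖ ^ 2) ≤ 1 ∧ β_d * ‖w‖ ≤ ⟪D q, w⟫)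
    (hι : ∀ w : W, ‖ι w‖ ≤ c_ι * ‖w‖)
    {z : Z} {p : W} {σ : X} {u : V} {γ : Q}
    (hz : IsDarcySolution T D z p) (hσ : IsElasticSolution A De S α (ι p) σ u γ) :
    ‖z‖ ^ 2 + ‖p‖ ^ 2 + ⟪A σ, σ⟫ + ‖u‖ ^ 2 + ‖γ‖ ^ 2
      ≤ (k_max + (1 + a_max * c_ι ^ 2 + (2 * a_max * c_ι / β_e) ^ 2) / (k_min * β_d ^ 2))
        * ⟪T z, z⟫ := by
  set E := ⟪T z, z⟫
  have hzE : ‖z‖ ^ 2 ≤ k_max * E := by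
    have h := hTlow z
    rwa [one_div, inv_mul_le_iff₀ hk_max] at h
  have hpE : ‖p‖ ^ 2 ≤ E / (k_min * β_d ^ 2) := by
    have h := hz.sq_mul_norm_le hT (by positivity) hTup hβ_d.le hinfsupD
    rw [le_div_iff₀ (by positivity)]
    calc ‖p‖ ^ 2 * (k_min * β_d ^ 2) = k_min * (β_d * ‖p‖) ^ 2 := by ring
      _ ≤ k_min * (1 / k_min * E) := by gcongr
      _ = E := by field_simp
  have hιp : ‖ι p‖ ^ 2 ≤ c_ι ^ 2 * ‖p‖ ^ 2 := by
    rw [← mul_pow]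
    exact pow_le_pow_left₀ (norm_nonneg _) (hι p) 2
  have hmech := hσ.inner_self_add_sq_add_sq_le hA ha_max hAup hα hβ_e hinfsupE
  calc ‖z‖ ^ 2 + ‖p‖ ^ 2 + ⟪A σ, σ⟫ + ‖u‖ ^ 2 + ‖γ‖ ^ 2
        = ‖z‖ ^ 2 + ‖p‖ ^ 2 + (⟪A σ, σ⟫ + ‖u‖ ^ 2 + ‖γ‖ ^ 2) := by ring
    _ ≤ k_max * E + ‖p‖ ^ 2 + (a_max + (2 * a_max / β_e) ^ 2) * (c_ι ^ 2 * ‖p‖ ^ 2) := by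
      gcongr
      exact hmech.trans (by gcongr)
    _ = k_max * E + (1 + a_max * c_ι ^ 2 + (2 * a_max * c_ι / β_e) ^ 2) * ‖p‖ ^ 2 := by ring
    _ ≤ k_max * E + (1 + a_max * c_ι ^ 2 + (2 * a_max * c_ι / β_e) ^ 2)
          * (E / (k_min * β_d ^ 2)) := by gcongr
    _ = _ := by ring

end FixedStress

theorem stmt_6_general (α a_max k_min k_max β_e β_d c_ι : ℝ)
    (hα0 : 0 < α) (hα1 : α ≤ 1) (ha_max : 0 < a_max)
    (hk_min : 0 < k_min) (hk : k_min ≤ k_max)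
    (hβ_e : 0 < β_e) (hβ_d : 0 < β_d) :
    ∃ C : ℝ, ∀ (X V Q Z W : Type*)
      [NormedAddCommGroup X] [InnerProductSpace ℝ X]
      [NormedAddCommGroup V] [InnerProductSpace ℝ V]
      [NormedAddCommGroup Q] [InnerProductSpace ℝ Q]
      [NormedAddCommGroup Z] [InnerProductSpace ℝ Z]
      [NormedAddCommGroup W] [InnerProductSpace ℝ W]
      (A : X →L[ℝ] X) (T : Z →L[ℝ] Z)
      (De : X →ₗ[ℝ] V) (S : X →ₗ[ℝ] Q) (D : Z →ₗ[ℝ] W) (ι : W →ₗ[ℝ] X)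
      (c₀ Δt : ℝ) (N : ℕ)
      (σ : ℕ → X) (u : ℕ → V) (γ : ℕ → Q) (z : ℕ → Z) (p : ℕ → W)
      (hAsym : ∀ σ' τ : X, ⟪A σ', τ⟫ = ⟪σ', A τ⟫)
      (hAlow : ∃ a_min : ℝ, 0 < a_min ∧ ∀ τ : X, a_min * ‖τ‖ ^ 2 ≤ ⟪A τ, τ⟫)
      (hAup : ∀ τ : X, ⟪A τ, τ⟫ ≤ a_max * ‖τ‖ ^ 2)
      (hTsym : ∀ q r : Z, ⟪T q, r⟫ = ⟪q, T r⟫)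
      (hTlow : ∀ q : Z, 1 / k_max * ‖q‖ ^ 2 ≤ ⟪T q, q⟫)
      (hTup : ∀ q : Z, ⟪T q, q⟫ ≤ 1 / k_min * ‖q‖ ^ 2)
      (hinfsupE : ∀ (v : V) (ξ : Q), ∃ τ : X,
        Real.sqrt (‖τ‖ ^ 2 + ‖De τ‖ ^ 2) ≤ 1 ∧
        β_e * (‖v‖ + ‖ξ‖) ≤ ⟪v, De τ⟫ + ⟪ξ, S τ⟫)
      (hinfsupD : ∀ w : W, ∃ q : Z,
        Real.sqrt (‖q‖ ^ 2 + ‖D q‖ ^ 2) ≤ 1 ∧ β_d * ‖w‖ ≤ ⟪D q, w⟫)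
      (hι : ∀ w : W, ‖ι w‖ ≤ c_ι * ‖w‖)
      (hc₀ : 0 ≤ c₀) (hΔt : 0 < Δt) (hN : 1 ≤ N)
      (hi : ∀ n : ℕ, n ≤ N → ∀ τ : X,
        ⟪A (σ n), τ⟫ + ⟪u n, De τ⟫ + ⟪γ n, S τ⟫ = -(α * ⟪A (ι (p n)), τ⟫))
      (hii : ∀ n : ℕ, n ≤ N → De (σ n) = 0)
      (hiii : ∀ n : ℕ, n ≤ N → S (σ n) = 0)
      (hiv : ∀ n : ℕ, n ≤ N → ∀ q : Z, ⟪T (z n), q⟫ = ⟪p n, D q⟫)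
      (hv : ∀ n : ℕ, n < N → ∀ w : W,
        c₀ / Δt * ⟪p (n + 1) - p n, w⟫
          + α ^ 2 / Δt * ⟪A (ι (p (n + 1) - p n)), ι w⟫
          + ⟪D (z (n + 1)), w⟫
        = -(α / Δt * ⟪A (σ n - σ (n - 1)), ι w⟫)),
      (∑ n ∈ Finset.range N, c₀ / Δt * ‖p (n + 1) - p n‖ ^ 2)
        + ((Finset.range N).sup'
            (Finset.nonempty_range_iff.mpr (Nat.one_le_iff_ne_zero.mp hN))
            fun n => ‖z (n + 1)‖ ^ 2 + ‖p (n + 1)‖ ^ 2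
              + ⟪A (σ (n + 1)), σ (n + 1)⟫ + ‖u (n + 1)‖ ^ 2 + ‖γ (n + 1)‖ ^ 2)
      ≤ C * ‖z 0‖ ^ 2 := by
  set K := k_max + (1 + a_max * c_ι ^ 2 + (2 * a_max * c_ι / β_e) ^ 2) / (k_min * β_d ^ 2)
    with hKdef
  have hk_max : 0 < k_max := hk_min.trans_le hk
  have hK : 0 ≤ K := by rw [hKdef]; positivity
  refine ⟨(1 / 2 + K) / k_min, ?_⟩
  intro X V Q Z W _ _ _ _ _ _ _ _ _ _ A T De S D ι c₀ Δt N σ u γ z p hAsym hAlow hAup hTsym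
    hTlow hTup hinfsupE hinfsupD hι hc₀ hΔt hN hi hii hiii hiv hv
  obtain ⟨a_min, ha_min, hAlow⟩ := hAlow
  have hTpos : ∀ q, 0 ≤ ⟪T q, q⟫ := fun q => le_trans (by positivity) (hTlow q)
  have hA : (A : X →ₗ[ℝ] X).IsPositive :=
    (LinearMap.isPositive_iff _).2 ⟨hAsym, fun τ => le_trans (by positivity) (hAlow τ)⟩
  have hT : (T : Z →ₗ[ℝ] Z).IsPositive := (LinearMap.isPositive_iff _).2 ⟨hTsym, hTpos⟩
  have hdarcy : ∀ n ≤ N, IsDarcySolution (T : Z →ₗ[ℝ] Z) D (z n) (p n) := hiv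
  have helastic :
      ∀ n ≤ N, IsElasticSolution (A : X →ₗ[ℝ] X) De S α (ι (p n)) (σ n) (u n) (γ n) := fun n hn => ⟨hi n hn, hii n hn, hiii n hn⟩
  have henergy := fixed_stress_energy_le hA hT hΔt hdarcy helastic hv
  simp only [ContinuousLinearMap.coe_coe] at henergy
  have hE : ∀ m ≤ N, ⟪T (z m), z m⟫ ≤ ⟪T (z 0), z 0⟫ := fun m hm => by
    have hsum : 0 ≤ ∑ k ∈ range m, c₀ / Δt * ‖p (k + 1) - p k‖ ^ 2 :=
      sum_nonneg fun k _ => by positivity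
    linarith [henergy m hm]
  calc _ ≤ ⟪T (z 0), z 0⟫ / 2 + K * ⟪T (z 0), z 0⟫ := by
        refine add_le_add ?_ (sup'_le _ _ fun n hn => ?_)
        · linarith [henergy N le_rfl, hTpos (z N)]
        have hn : n + 1 ≤ N := mem_range.1 hn
        exact (fixed_stress_level_le hA hT ha_max.le hk_min hk_max hβ_e hβ_d
          (abs_le.2 ⟨by linarith, hα1⟩) hAup hTlow hTup hinfsupE hinfsupD hι (hdarcy _ hn)
          (helastic _ hn)).trans (mul_le_mul_of_nonneg_left (hE _ hn) hK)
    _ = (1 / 2 + K) * ⟪T (z 0), z 0⟫ := by ring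
    _ ≤ (1 / 2 + K) * (1 / k_min * ‖z 0‖ ^ 2) := by gcongr; exact hTup (z 0)
    _ = (1 / 2 + K) / k_min * ‖z 0‖ ^ 2 := by ring

/-- Unconditional stability of the fixed stress scheme (abstract algebraic form).
The indices follow the convention `σ^{-1} := σ⁰`, realized via truncated natural
subtraction: equations (i)–(iv) are stated at levels `n = 0, …, N`, and
equation (v), with data `σ n - σ (n - 1)`, at steps `n = 0, …, N-1`. -/
theorem stmt_6 (α a_max k_min k_max β_e β_d c_ι : ℝ)
    (hα0 : 0 < α) (hα1 : α ≤ 1) (ha_max : 0 < a_max)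
    (hk_min : 0 < k_min) (hk : k_min ≤ k_max)
    (hβ_e : 0 < β_e) (hβ_d : 0 < β_d) (hc_ι : 0 < c_ι) :
    ∃ C : ℝ, ∀ (X V Q Z W : Type*)
      [NormedAddCommGroup X] [InnerProductSpace ℝ X]
      [NormedAddCommGroup V] [InnerProductSpace ℝ V]
      [NormedAddCommGroup Q] [InnerProductSpace ℝ Q]
      [NormedAddCommGroup Z] [InnerProductSpace ℝ Z]
      [NormedAddCommGroup W] [InnerProductSpace ℝ W]
      (A : X →L[ℝ] X) (T : Z →L[ℝ] Z)
      (De : X →ₗ[ℝ] V) (S : X →ₗ[ℝ] Q) (D : Z →ₗ[ℝ] W) (ι : W →ₗ[ℝ] X)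
      (c₀ Δt : ℝ) (N : ℕ)
      (σ : ℕ → X) (u : ℕ → V) (γ : ℕ → Q) (z : ℕ → Z) (p : ℕ → W)
      (hAsym : ∀ σ' τ : X, ⟪A σ', τ⟫ = ⟪σ', A τ⟫)
      (hAlow : ∃ a_min : ℝ, 0 < a_min ∧ ∀ τ : X, a_min * ‖τ‖ ^ 2 ≤ ⟪A τ, τ⟫)
      (hAup : ∀ τ : X, ⟪A τ, τ⟫ ≤ a_max * ‖τ‖ ^ 2)
      (hTsym : ∀ q r : Z, ⟪T q, r⟫ = ⟪q, T r⟫)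
      (hTlow : ∀ q : Z, 1 / k_max * ‖q‖ ^ 2 ≤ ⟪T q, q⟫)
      (hTup : ∀ q : Z, ⟪T q, q⟫ ≤ 1 / k_min * ‖q‖ ^ 2)
      (hinfsupE : ∀ (v : V) (ξ : Q), ∃ τ : X,
        Real.sqrt (‖τ‖ ^ 2 + ‖De τ‖ ^ 2) ≤ 1 ∧
        β_e * (‖v‖ + ‖ξ‖) ≤ ⟪v, De τ⟫ + ⟪ξ, S τ⟫)
      (hinfsupD : ∀ w : W, ∃ q : Z,
        Real.sqrt (‖q‖ ^ 2 + ‖D q‖ ^ 2) ≤ 1 ∧ β_d * ‖w‖ ≤ ⟪D q, w⟫)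
      (hι : ∀ w : W, ‖ι w‖ ≤ c_ι * ‖w‖)
      (hc₀ : 0 ≤ c₀) (hΔt : 0 < Δt) (hN : 1 ≤ N)
      (hi : ∀ n : ℕ, n ≤ N → ∀ τ : X,
        ⟪A (σ n), τ⟫ + ⟪u n, De τ⟫ + ⟪γ n, S τ⟫ = -(α * ⟪A (ι (p n)), τ⟫))
      (hii : ∀ n : ℕ, n ≤ N → De (σ n) = 0)
      (hiii : ∀ n : ℕ, n ≤ N → S (σ n) = 0)
      (hiv : ∀ n : ℕ, n ≤ N → ∀ q : Z, ⟪T (z n), q⟫ = ⟪p n, D q⟫)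
      (hv : ∀ n : ℕ, n < N → ∀ w : W,
        c₀ / Δt * ⟪p (n + 1) - p n, w⟫
          + α ^ 2 / Δt * ⟪A (ι (p (n + 1) - p n)), ι w⟫
          + ⟪D (z (n + 1)), w⟫
        = -(α / Δt * ⟪A (σ n - σ (n - 1)), ι w⟫)),
      (∑ n ∈ Finset.range N, c₀ / Δt * ‖p (n + 1) - p n‖ ^ 2)
        + ((Finset.range N).sup'
            (Finset.nonempty_range_iff.mpr (Nat.one_le_iff_ne_zero.mp hN))
            fun n => ‖z (n + 1)‖ ^ 2 + ‖p (n + 1)‖ ^ 2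
              + ⟪A (σ (n + 1)), σ (n + 1)⟫ + ‖u (n + 1)‖ ^ 2 + ‖γ (n + 1)‖ ^ 2)
      ≤ C * ‖z 0‖ ^ 2 :=
  stmt_6_general α a_max k_min k_max β_e β_d c_ι hα0 hα1 ha_max hk_min hk hβ_e hβ_d
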